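/- (Orthogonality of summands.) With the zero-padded MOSES iterates Ŷ_{k,r} ∈ ℝ^{n×Kb}, row spaces Q̂_{k,r} = span(Ŷ_{k,r}*), and Q̃_k = Q̂_{k−1,r} ⊕ I_k, it holds for every k ∈ [2:K] that ⟨Y_{k−1} − Ŷ_{k−1,r}, Y_K(P_{Q̃_k} − P_{Q̂_{k,r}})⟩ = 0, where ⟨·,·⟩ is the Frobenius (trace) inner product on ℝ^{n×Kb}. -/

import Mathlib

open MeasureTheory ProbabilityTheory Matrix

noncomputable def frobNorm {n m : ℕ} (A : Matrix (Fin n) (Fin m) ℝ) : ℝ :=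
  Real.sqrt (∑ i, ∑ j, (A i j) ^ 2)

noncomputable def frobInner {n m : ℕ} (A B : Matrix (Fin n) (Fin m) ℝ) : ℝ :=
  ∑ i, ∑ j, A i j * B i j

noncomputable def specNorm {n m : ℕ} (A : Matrix (Fin n) (Fin m) ℝ) : ℝ :=
  ‖LinearMap.toContinuousLinearMap (Matrix.toEuclideanLin A)‖

noncomputable def singularValue {n m : ℕ} (A : Matrix (Fin n) (Fin m) ℝ) (i : Fin n) : ℝ :=
  Real.sqrt ((Matrix.isHermitian_mul_conjTranspose_self A).eigenvalues
    (Tuple.sort (Matrix.isHermitian_mul_conjTranspose_self A).eigenvalues i.rev))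

noncomputable def residualSq {n m : ℕ} (r : ℕ) (A : Matrix (Fin n) (Fin m) ℝ) : ℝ :=
  ∑ i : Fin n, if r ≤ (i : ℕ) then (singularValue A i) ^ 2 else 0

def IsTruncSVD {n m : ℕ} (r : ℕ) (A Ar : Matrix (Fin n) (Fin m) ℝ) : Prop :=
  Ar.rank ≤ r ∧ ∀ B : Matrix (Fin n) (Fin m) ℝ, B.rank ≤ r →
    frobNorm (A - Ar) ≤ frobNorm (A - B)

noncomputable def colSpan {n m : ℕ} (A : Matrix (Fin n) (Fin m) ℝ) :
    Submodule ℝ (EuclideanSpace ℝ (Fin n)) :=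
  Submodule.span ℝ (Set.range fun j : Fin m =>
    ((WithLp.equiv 2 (Fin n → ℝ)).symm fun i => A i j))

noncomputable def rowSpan {n m : ℕ} (A : Matrix (Fin n) (Fin m) ℝ) :
    Submodule ℝ (EuclideanSpace ℝ (Fin m)) := colSpan Aᵀ

noncomputable def projMatrix {n : ℕ} (U : Submodule ℝ (EuclideanSpace ℝ (Fin n))) :
    Matrix (Fin n) (Fin n) ℝ :=
  Matrix.of fun i j =>
    (U.orthogonalProjection (EuclideanSpace.single j 1) : EuclideanSpace ℝ (Fin n)) i

noncomputable def coordSubspace {M : ℕ} (s t : ℕ) : Submodule ℝ (EuclideanSpace ℝ (Fin M)) :=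
  Submodule.span ℝ ((fun j : Fin M => (EuclideanSpace.single j (1:ℝ))) ''
    {j : Fin M | s ≤ (j : ℕ) ∧ (j : ℕ) < t})

def padTrunc {n M : ℕ} (A : Matrix (Fin n) (Fin M) ℝ) (m : ℕ) :
    Matrix (Fin n) (Fin M) ℝ :=
  Matrix.of fun i j => if (j : ℕ) < m then A i j else 0

def IsMOSES {n M : ℕ} (r b K : ℕ) (Y : Matrix (Fin n) (Fin M) ℝ)
    (Yhat : ℕ → Matrix (Fin n) (Fin M) ℝ) : Prop :=
  Yhat 0 = 0 ∧ ∀ k, 1 ≤ k → k ≤ K →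
    IsTruncSVD r (Yhat (k - 1) + (padTrunc Y (k * b) - padTrunc Y ((k - 1) * b))) (Yhat k)

noncomputable def stdGaussianSeq (n m : ℕ) : Measure (Fin n → Fin m → ℝ) :=
  Measure.pi fun _ => Measure.pi fun _ => gaussianReal 0 1

noncomputable def gaussianOfRoot {n : ℕ} (A : Matrix (Fin n) (Fin n) ℝ) :
    Measure (EuclideanSpace ℝ (Fin n)) :=
  (Measure.pi fun _ : Fin n => gaussianReal 0 1).map
    (fun g => (WithLp.equiv 2 (Fin n → ℝ)).symm (A.mulVec g))

/-! A best rank-`r` approximation `Xr` of `X` has its rows in the row space of `X`, and its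
residual `X - Xr` is orthogonal to the row space of `Xr`: in either case projecting onto the
relevant row space produces a rank-`r` competitor that, by Pythagoras, would be strictly closer to
`X` otherwise. Inductively, the MOSES residual `Y_{k-1} - Ŷ_{k-1,r}` is then orthogonal to
`Q̂_{k-1,r}`, and, being supported on the first `(k-1)b` columns, also to `I_k`; so it is
orthogonal to `Q̃_k` and to `Q̂_{k,r} ⊆ Q̃_k`, which contain the rows of `Y_K P_{Q̃_k}` and
`Y_K P_{Q̂_{k,r}}`. -/

open scoped InnerProductSpace

theorem eq_of_norm_sub_le_of_inner_sub_eq_zero {E : Type*} [NormedAddCommGroup E]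
    [InnerProductSpace ℝ E] {a b c : E} (hle : ‖a - c‖ ≤ ‖a - b‖)
    (horth : ⟪a - b, c - b⟫_ℝ = 0) : c = b := by
  have hpyth := norm_sub_sq_real (a - b) (c - b)
  rw [sub_sub_sub_cancel_right, horth] at hpyth
  have hcb : ‖c - b‖ ^ 2 ≤ 0 := by nlinarith [norm_nonneg (a - c), norm_nonneg (a - b)]
  rw [← sub_eq_zero, ← norm_eq_zero, ← sq_eq_zero_iff (M₀ := ℝ)]
  exact le_antisymm hcb (sq_nonneg _)

section Rows

variable {n m : ℕ}

def eucRow (A : Matrix (Fin n) (Fin m) ℝ) (i : Fin n) : EuclideanSpace ℝ (Fin m) :=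
  WithLp.toLp 2 (A i)

@[simp]
theorem eucRow_apply (A : Matrix (Fin n) (Fin m) ℝ) (i : Fin n) (j : Fin m) :
    eucRow A i j = A i j := rfl

theorem eucRow_sub (A B : Matrix (Fin n) (Fin m) ℝ) : eucRow (A - B) = eucRow A - eucRow B := rfl

theorem rowSpan_eq_span_range_eucRow (A : Matrix (Fin n) (Fin m) ℝ) :
    rowSpan A = Submodule.span ℝ (Set.range (eucRow A)) := rfl

theorem eucRow_mem_rowSpan (A : Matrix (Fin n) (Fin m) ℝ) (i : Fin n) :
    eucRow A i ∈ rowSpan A :=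
  Submodule.subset_span ⟨i, rfl⟩

theorem rowSpan_le_iff {A : Matrix (Fin n) (Fin m) ℝ}
    {U : Submodule ℝ (EuclideanSpace ℝ (Fin m))} :
    rowSpan A ≤ U ↔ ∀ i, eucRow A i ∈ U := by
  rw [rowSpan_eq_span_range_eucRow, Submodule.span_le, Set.range_subset_iff]
  rfl

theorem rowSpan_zero : rowSpan (0 : Matrix (Fin n) (Fin m) ℝ) = ⊥ :=
  eq_bot_iff.mpr (rowSpan_le_iff.mpr fun _ => Submodule.zero_mem _)

theorem rowSpan_add_le (A B : Matrix (Fin n) (Fin m) ℝ) :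
    rowSpan (A + B) ≤ rowSpan A ⊔ rowSpan B :=
  rowSpan_le_iff.mpr fun i =>
    Submodule.add_mem_sup (eucRow_mem_rowSpan A i) (eucRow_mem_rowSpan B i)

theorem rowSpan_sub_le (A B : Matrix (Fin n) (Fin m) ℝ) :
    rowSpan (A - B) ≤ rowSpan A ⊔ rowSpan B :=
  rowSpan_le_iff.mpr fun i =>
    Submodule.sub_mem_sup (eucRow_mem_rowSpan A i) (eucRow_mem_rowSpan B i)

theorem rank_eq_finrank_rowSpan (A : Matrix (Fin n) (Fin m) ℝ) :
    A.rank = Module.finrank ℝ (rowSpan A) := by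
  rw [A.rank_eq_finrank_span_row, rowSpan_eq_span_range_eucRow,
    ← (WithLp.linearEquiv 2 ℝ (Fin m → ℝ)).finrank_map_eq, Submodule.map_span,
    ← Set.range_comp]
  rfl

end Rows

section Frobenius

variable {n m : ℕ}

def rowVectors (A : Matrix (Fin n) (Fin m) ℝ) :
    PiLp 2 (fun _ : Fin n => EuclideanSpace ℝ (Fin m)) :=
  WithLp.toLp 2 (eucRow A)

theorem rowVectors_sub (A B : Matrix (Fin n) (Fin m) ℝ) :
    rowVectors (A - B) = rowVectors A - rowVectors B := rfl

theorem rowVectors_injective : Function.Injective (rowVectors (n := n) (m := m)) :=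
  fun _ _ h => by
    ext i j
    exact congrArg (fun v => v i j) h

theorem frobInner_eq_sum_inner (A B : Matrix (Fin n) (Fin m) ℝ) :
    frobInner A B = ∑ i, ⟪eucRow A i, eucRow B i⟫_ℝ := by
  simp only [frobInner, PiLp.inner_apply, eucRow_apply, RCLike.inner_apply, conj_trivial]
  simp_rw [mul_comm]

theorem frobInner_eq_inner_rowVectors (A B : Matrix (Fin n) (Fin m) ℝ) :
    frobInner A B = ⟪rowVectors A, rowVectors B⟫_ℝ := by
  rw [frobInner_eq_sum_inner, PiLp.inner_apply]
  rfl

theorem frobNorm_eq_norm_rowVectors (A : Matrix (Fin n) (Fin m) ℝ) :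
    frobNorm A = ‖rowVectors A‖ := by
  rw [frobNorm, PiLp.norm_eq_of_L2]
  congr 1
  refine Finset.sum_congr rfl fun i _ => ?_
  simp [EuclideanSpace.norm_sq_eq, rowVectors]

theorem frobInner_sub_right (A B C : Matrix (Fin n) (Fin m) ℝ) :
    frobInner A (B - C) = frobInner A B - frobInner A C := by
  simp only [frobInner_eq_inner_rowVectors, rowVectors_sub, inner_sub_right]

theorem frobInner_eq_zero_of_isOrtho {A B : Matrix (Fin n) (Fin m) ℝ}
    (h : rowSpan A ⟂ rowSpan B) : frobInner A B = 0 := by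
  rw [frobInner_eq_sum_inner]
  exact Finset.sum_eq_zero fun i _ => h.inner_eq (eucRow_mem_rowSpan A i) (eucRow_mem_rowSpan B i)

end Frobenius

section Projection

variable {n m : ℕ}

theorem eucRow_mul_projMatrix (A : Matrix (Fin n) (Fin m) ℝ)
    (U : Submodule ℝ (EuclideanSpace ℝ (Fin m))) (i : Fin n) :
    eucRow (A * projMatrix U) i = U.starProjection (eucRow A i) := by
  ext j
  have hcoord : U.starProjection (eucRow A i) j
      = ⟪U.starProjection (EuclideanSpace.single j 1), eucRow A i⟫_ℝ := by
    rw [U.inner_starProjection_left_eq_right, EuclideanSpace.inner_single_left]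
    simp
  rw [hcoord, PiLp.inner_apply]
  simp [projMatrix, Matrix.mul_apply]

theorem rowSpan_mul_projMatrix_le (A : Matrix (Fin n) (Fin m) ℝ)
    (U : Submodule ℝ (EuclideanSpace ℝ (Fin m))) : rowSpan (A * projMatrix U) ≤ U :=
  rowSpan_le_iff.mpr fun i => by
    rw [eucRow_mul_projMatrix]
    exact U.starProjection_apply_mem _

theorem rowSpan_sub_mul_projMatrix_le (A : Matrix (Fin n) (Fin m) ℝ)
    (U : Submodule ℝ (EuclideanSpace ℝ (Fin m))) : rowSpan (A - A * projMatrix U) ≤ Uᗮ :=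
  rowSpan_le_iff.mpr fun i => by
    rw [eucRow_sub, Pi.sub_apply, eucRow_mul_projMatrix]
    exact U.sub_starProjection_mem_orthogonal _

theorem mul_projMatrix_of_rowSpan_le {A : Matrix (Fin n) (Fin m) ℝ}
    {U : Submodule ℝ (EuclideanSpace ℝ (Fin m))} (h : rowSpan A ≤ U) :
    A * projMatrix U = A := by
  ext i j
  have hrow := congrArg (· j) (eucRow_mul_projMatrix A U i)
  simpa only [U.starProjection_eq_self_iff.mpr (rowSpan_le_iff.mp h i), eucRow_apply] using hrow

theorem frobInner_mul_projMatrix_eq_zero {A : Matrix (Fin n) (Fin m) ℝ}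
    {U : Submodule ℝ (EuclideanSpace ℝ (Fin m))} (h : rowSpan A ⟂ U)
    (B : Matrix (Fin n) (Fin m) ℝ) : frobInner A (B * projMatrix U) = 0 :=
  frobInner_eq_zero_of_isOrtho (h.mono_right (rowSpan_mul_projMatrix_le B U))

end Projection

namespace IsTruncSVD

variable {n m r : ℕ} {X Xr : Matrix (Fin n) (Fin m) ℝ}

theorem eq_of_isOrtho (h : IsTruncSVD r X Xr) {B : Matrix (Fin n) (Fin m) ℝ} (hB : B.rank ≤ r)
    (horth : rowSpan (X - B) ⟂ rowSpan (Xr - B)) : Xr = B := by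
  have hle := h.2 B hB
  have hinner := frobInner_eq_zero_of_isOrtho horth
  rw [frobNorm_eq_norm_rowVectors, frobNorm_eq_norm_rowVectors, rowVectors_sub,
    rowVectors_sub] at hle
  rw [frobInner_eq_inner_rowVectors, rowVectors_sub, rowVectors_sub] at hinner
  exact rowVectors_injective (eq_of_norm_sub_le_of_inner_sub_eq_zero hle hinner)

theorem rowSpan_le (h : IsTruncSVD r X Xr) : rowSpan Xr ≤ rowSpan X := by
  have hXP : X * projMatrix (rowSpan X) = X := mul_projMatrix_of_rowSpan_le le_rfl
  have hXr : Xr = Xr * projMatrix (rowSpan X) := by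
    refine h.eq_of_isOrtho ((rank_mul_le_left _ _).trans h.1) ?_
    refine (Submodule.isOrtho_orthogonal_right (rowSpan X)).mono ?_
      (rowSpan_sub_mul_projMatrix_le Xr _)
    nth_rewrite 1 [← hXP]
    rw [← Matrix.sub_mul]
    exact rowSpan_mul_projMatrix_le _ _
  rw [hXr]
  exact rowSpan_mul_projMatrix_le _ _

theorem isOrtho (h : IsTruncSVD r X Xr) : rowSpan (X - Xr) ⟂ rowSpan Xr := by
  have hrank : (X * projMatrix (rowSpan Xr)).rank ≤ r := by
    rw [rank_eq_finrank_rowSpan]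
    exact (Submodule.finrank_mono (rowSpan_mul_projMatrix_le X _)).trans
      (rank_eq_finrank_rowSpan Xr ▸ h.1)
  have hXr : Xr = X * projMatrix (rowSpan Xr) := by
    refine h.eq_of_isOrtho hrank ((Submodule.isOrtho_orthogonal_left _).mono
      (rowSpan_sub_mul_projMatrix_le X _) ?_)
    exact (rowSpan_sub_le _ _).trans (sup_le le_rfl (rowSpan_mul_projMatrix_le X _))
  refine (Submodule.isOrtho_orthogonal_left (rowSpan Xr)).mono_left ?_
  nth_rewrite 1 [hXr]
  exact rowSpan_sub_mul_projMatrix_le X _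

end IsTruncSVD

section Coordinates

variable {n M : ℕ}

theorem coordSubspace_mono {s t s' t' : ℕ} (hs : s' ≤ s) (ht : t ≤ t') :
    (coordSubspace s t : Submodule ℝ (EuclideanSpace ℝ (Fin M))) ≤ coordSubspace s' t' :=
  Submodule.span_mono (Set.image_mono fun _ hj => ⟨hs.trans hj.1, hj.2.trans_le ht⟩)

theorem coordSubspace_isOrtho {s t s' t' : ℕ} (h : t ≤ s') :
    (coordSubspace s t : Submodule ℝ (EuclideanSpace ℝ (Fin M))) ⟂ coordSubspace s' t' := by
  rw [coordSubspace, coordSubspace, Submodule.isOrtho_span]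
  rintro _ ⟨j, hj, rfl⟩ _ ⟨l, hl, rfl⟩
  have hjl : j ≠ l := fun hjl => by
    subst hjl
    exact absurd (hj.2.trans_le h) (not_lt.mpr hl.1)
  simp [EuclideanSpace.inner_single_left, hjl.symm]

theorem mem_coordSubspace_of_apply_ne_zero {s t : ℕ} {v : EuclideanSpace ℝ (Fin M)}
    (hv : ∀ j : Fin M, v j ≠ 0 → s ≤ j ∧ (j : ℕ) < t) : v ∈ coordSubspace s t := by
  rw [← (EuclideanSpace.basisFun (Fin M) ℝ).sum_repr v]
  refine Submodule.sum_mem _ fun j _ => ?_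
  by_cases hj : v j = 0
  · simp [hj]
  · exact Submodule.smul_mem _ _ (Submodule.subset_span ⟨j, hv j hj, by simp⟩)

theorem rowSpan_padTrunc_sub_le (Y : Matrix (Fin n) (Fin M) ℝ) {s t : ℕ} (hst : s ≤ t) :
    rowSpan (padTrunc Y t - padTrunc Y s) ≤ coordSubspace s t :=
  rowSpan_le_iff.mpr fun i => mem_coordSubspace_of_apply_ne_zero fun j hj => by
    simp only [eucRow_apply, Matrix.sub_apply, padTrunc, Matrix.of_apply] at hj
    split_ifs at hj <;> first | omega | simp at hj

theorem rowSpan_padTrunc_le (Y : Matrix (Fin n) (Fin M) ℝ) (t : ℕ) :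
    rowSpan (padTrunc Y t) ≤ coordSubspace 0 t := by
  have hzero : padTrunc Y 0 = 0 := by
    ext
    simp [padTrunc]
  simpa [hzero] using rowSpan_padTrunc_sub_le Y (Nat.zero_le t)

end Coordinates

theorem isOrtho_sup_coordSubspace {n M : ℕ} {Y Z : Matrix (Fin n) (Fin M) ℝ} {s : ℕ} (t : ℕ)
    (hZ : rowSpan Z ≤ coordSubspace 0 s) (h : rowSpan (padTrunc Y s - Z) ⟂ rowSpan Z) :
    rowSpan (padTrunc Y s - Z) ⟂ rowSpan Z ⊔ coordSubspace s t :=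
  Submodule.isOrtho_sup_right.mpr ⟨h, (coordSubspace_isOrtho le_rfl).mono_left
    ((rowSpan_sub_le _ _).trans (sup_le (rowSpan_padTrunc_le Y s) hZ))⟩

namespace IsMOSES

variable {n M r b K : ℕ} {Y : Matrix (Fin n) (Fin M) ℝ}
  {Yhat : ℕ → Matrix (Fin n) (Fin M) ℝ}

theorem isTruncSVD_succ (h : IsMOSES r b K Y Yhat) {j : ℕ} (hj : j + 1 ≤ K) :
    IsTruncSVD r (Yhat j + (padTrunc Y ((j + 1) * b) - padTrunc Y (j * b))) (Yhat (j + 1)) :=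
  h.2 (j + 1) (Nat.le_add_left 1 j) hj

theorem rowSpan_succ_le (h : IsMOSES r b K Y Yhat) {j : ℕ} (hj : j + 1 ≤ K) :
    rowSpan (Yhat (j + 1)) ≤ rowSpan (Yhat j) ⊔ coordSubspace (j * b) ((j + 1) * b) :=
  (h.isTruncSVD_succ hj).rowSpan_le.trans <| (rowSpan_add_le _ _).trans <|
    sup_le_sup_left (rowSpan_padTrunc_sub_le Y (Nat.mul_le_mul_right b j.le_succ)) _

theorem rowSpan_le_coordSubspace (h : IsMOSES r b K Y Yhat) :
    ∀ j ≤ K, rowSpan (Yhat j) ≤ coordSubspace 0 (j * b)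
  | 0, _ => by rw [h.1, rowSpan_zero]; exact bot_le
  | j + 1, hj => (h.rowSpan_succ_le hj).trans <| sup_le
      ((h.rowSpan_le_coordSubspace j (by omega)).trans
        (coordSubspace_mono le_rfl (Nat.mul_le_mul_right b j.le_succ)))
      (coordSubspace_mono (Nat.zero_le _) le_rfl)

theorem isOrtho_residual (h : IsMOSES r b K Y Yhat) :
    ∀ j ≤ K, rowSpan (padTrunc Y (j * b) - Yhat j) ⟂ rowSpan (Yhat j)
  | 0, _ => by rw [h.1, rowSpan_zero]; exact Submodule.isOrtho_bot_right
  | j + 1, hj => by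
    have hprev := isOrtho_sup_coordSubspace ((j + 1) * b)
      (h.rowSpan_le_coordSubspace j (by omega)) (h.isOrtho_residual j (by omega))
    have hsplit : padTrunc Y ((j + 1) * b) - Yhat (j + 1) = (padTrunc Y (j * b) - Yhat j) +
        ((Yhat j + (padTrunc Y ((j + 1) * b) - padTrunc Y (j * b))) - Yhat (j + 1)) := by
      abel
    rw [hsplit]
    exact (Submodule.isOrtho_sup_left.mpr ⟨hprev.mono_right (h.rowSpan_succ_le hj),
      (h.isTruncSVD_succ hj).isOrtho⟩).mono_left (rowSpan_add_le _ _)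

end IsMOSES

theorem stmt8_general (n M r b K : ℕ)
    (Y : Matrix (Fin n) (Fin M) ℝ)
    (Yhat : ℕ → Matrix (Fin n) (Fin M) ℝ) (hmoses : IsMOSES r b K Y Yhat) :
    ∀ k, 2 ≤ k → k ≤ K →
      frobInner (padTrunc Y ((k - 1) * b) - Yhat (k - 1))
        (Y * (projMatrix (rowSpan (Yhat (k - 1)) ⊔ coordSubspace ((k - 1) * b) (k * b)) -
              projMatrix (rowSpan (Yhat k)))) = 0 := by
  intro k _ hkK
  obtain ⟨j, rfl⟩ : ∃ j, k = j + 1 := ⟨k - 1, by omega⟩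
  rw [Nat.add_sub_cancel]
  have hW := isOrtho_sup_coordSubspace ((j + 1) * b)
    (hmoses.rowSpan_le_coordSubspace j (by omega)) (hmoses.isOrtho_residual j (by omega))
  rw [Matrix.mul_sub, frobInner_sub_right, frobInner_mul_projMatrix_eq_zero hW,
    frobInner_mul_projMatrix_eq_zero (hW.mono_right (hmoses.rowSpan_succ_le hkK)), sub_zero]

/-- Orthogonality of summands: with the zero-padded MOSES iterates
`Ŷ_{k,r} ∈ ℝ^{n×Kb}`, row spaces `Q̂_{k,r} = span(Ŷ_{k,r}*)` and
`Q̃_k = Q̂_{k−1,r} ⊕ I_k`, for every `k ∈ [2:K]`: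
`⟨Y_{k−1} − Ŷ_{k−1,r}, Y_K(P_{Q̃_k} − P_{Q̂_{k,r}})⟩ = 0` in the Frobenius inner
product on `ℝ^{n×Kb}`. -/
theorem stmt8 (n M r b K : ℕ) (hM : M = K * b)
    (Y : Matrix (Fin n) (Fin M) ℝ)
    (Yhat : ℕ → Matrix (Fin n) (Fin M) ℝ) (hmoses : IsMOSES r b K Y Yhat) :
    ∀ k, 2 ≤ k → k ≤ K →
      frobInner (padTrunc Y ((k - 1) * b) - Yhat (k - 1))
        (Y * (projMatrix (rowSpan (Yhat (k - 1)) ⊔ coordSubspace ((k - 1) * b) (k * b)) -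
              projMatrix (rowSpan (Yhat k)))) = 0 :=
  stmt8_general n M r b K Y Yhat hmoses
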